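/- Let ℜ be a nonempty loc-deterministic set of P-rules satisfying Assumptions 1 and 2 in which every constant occurs. Consider the sequent C = (φ1 * φ2) ⋏ (ξ1 ∧ ξ2) ⊢_ℜ^V (ψ1 * ψ2) ⋏ (ζ1 ∧ ζ2) with φ1 ≠ emp and φ2 ≠ emp, and the two premises Pi = φi ⋏ ξi ⊢_ℜ^{V + alloc(φ_{3−i})} ψi ⋏ ζi for i = 1, 2 (V + alloc(φ_{3−i}) denoting multiset sum). If (s,h) is a counter-model of C, then for some i ∈ {1,2} the sequent Pi admits a counter-model of the form (s, h') where h' is a proper subheap of h (h' ⊆ h and h' ≠ h). In particular, if P1 and P2 are both valid then C is valid (soundness of rule S). -/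

import Mathlib

open scoped Classical

namespace SLID

/-! ## Signatures, terms and formulas -/

/-- A signature: a set of sorts with a distinguished sort `loc` of memory locations,
predicate symbols with profiles (the first parameter being of sort `loc`),
and constants of each sort (no constants of sort `loc`). -/
structure Sig : Type 1 where
  Srt : Type
  loc : Srt
  Pred : Type
  arity : Pred → ℕ
  arity_pos : ∀ p, 0 < arity p
  psort : Pred → ℕ → Srt
  psort_zero : ∀ p, psort p 0 = loc
  Const : Srt → Type
  noLocConst : IsEmpty (Const loc)

variable {σ : Sig}

/-- Terms: variables of each sort (a countably infinite supply, indexed by `ℕ`)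
and constants. -/
inductive Term (σ : Sig) : Type where
  | var (s : σ.Srt) (n : ℕ) : Term σ
  | cst (s : σ.Srt) (c : σ.Const s) : Term σ

/-- The sort of a term. -/
def Term.sort : Term σ → σ.Srt
  | .var s _ => s
  | .cst s _ => s

/-- Variables, as (sort, index) pairs. -/
abbrev Vr (σ : Sig) : Type := σ.Srt × ℕ

/-- The set of variables of a term. -/
def Term.varSet : Term σ → Set (Vr σ)
  | .var s n => {(s, n)}
  | .cst _ _ => ∅

/-- Spatial atoms: points-to atoms `x ↦ (t₁,…,tₖ)` and predicate atoms
`p(x, t₂,…,tₙ)`.  The root `x` is a variable of sort `loc`, represented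
by its index. -/
inductive SAtom (σ : Sig) : Type where
  | pto (x : ℕ) (ts : List (Term σ)) : SAtom σ
  | pred (p : σ.Pred) (x : ℕ) (args : List (Term σ)) : SAtom σ

/-- The root of a spatial atom. -/
def SAtom.root : SAtom σ → ℕ
  | .pto x _ => x
  | .pred _ x _ => x

/-- The term at position `i` (0-indexed; position `0` is the root) of a
predicate atom. -/
def SAtom.argAt : SAtom σ → ℕ → Option (Term σ)
  | .pred _ x _, 0 => some (Term.var σ.loc x)
  | .pred _ _ args, j + 1 => args[j]?
  | .pto _ _, _ => none

/-- The set of terms occurring in a spatial atom. -/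
def SAtom.termSet : SAtom σ → Set (Term σ)
  | .pto x ts => insert (Term.var σ.loc x) {t | t ∈ ts}
  | .pred _ x args => insert (Term.var σ.loc x) {t | t ∈ args}

/-- The set of variables of a spatial atom. -/
def SAtom.varSet (a : SAtom σ) : Set (Vr σ) := ⋃ t ∈ SAtom.termSet a, Term.varSet t

/-- Pure atoms: equations `t ≈ u` and disequations `t ≉ u`. -/
inductive PAtom (σ : Sig) : Type where
  | eq (t u : Term σ) : PAtom σ
  | ne (t u : Term σ) : PAtom σ

/-- The set of terms occurring in a pure atom. -/
def PAtom.termSet : PAtom σ → Set (Term σ)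
  | .eq t u => {t, u}
  | .ne t u => {t, u}

/-- The set of variables of a pure atom. -/
def PAtom.varSet (a : PAtom σ) : Set (Vr σ) := ⋃ t ∈ PAtom.termSet a, Term.varSet t

/-- Spatial formulas: finite `*`-conjunctions of spatial atoms, taken modulo
associativity-commutativity of `*` (hence multisets); `emp` is `0` and `*` is `+`. -/
abbrev Spatial (σ : Sig) : Type := Multiset (SAtom σ)

/-- Pure formulas: finite conjunctions of equations and disequations, taken modulo
associativity-commutativity of `∧` (hence multisets); `⊤` is `0` and `∧` is `+`. -/
abbrev PureF (σ : Sig) : Type := Multiset (PAtom σ)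

/-- A symbolic heap `φ ⋏ ξ` with `φ` spatial and `ξ` pure. -/
structure SymHeap (σ : Sig) : Type where
  sp : Spatial σ
  pu : PureF σ

/-- The set of variables of a spatial formula. -/
def Spatial.varSet (φ : Spatial σ) : Set (Vr σ) := {v | ∃ a ∈ φ, v ∈ SAtom.varSet a}

/-- The set of variables of a pure formula. -/
def PureF.varSet (ξ : PureF σ) : Set (Vr σ) := {v | ∃ a ∈ ξ, v ∈ PAtom.varSet a}

/-- The set of variables of a symbolic heap. -/
def SymHeap.varSet (l : SymHeap σ) : Set (Vr σ) := Spatial.varSet l.sp ∪ PureF.varSet l.pu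

/-- The set of terms occurring in a symbolic heap. -/
def SymHeap.termSet (l : SymHeap σ) : Set (Term σ) :=
  {t | ∃ a ∈ l.sp, t ∈ SAtom.termSet a} ∪ {t | ∃ a ∈ l.pu, t ∈ PAtom.termSet a}

/-- `alloc(φ)`: the multiset of roots of the spatial atoms of `φ`
(as indices of variables of sort `loc`). -/
def alloc (φ : Spatial σ) : Multiset ℕ := φ.map SAtom.root

/-- `alloc(λ)` for a symbolic heap `λ`. -/
def SymHeap.alloc (l : SymHeap σ) : Multiset ℕ := SLID.alloc l.sp

/-- Sort-correctness of a pure atom. -/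
def PAtom.WF : PAtom σ → Prop
  | .eq t u => Term.sort t = Term.sort u
  | .ne t u => Term.sort t = Term.sort u

/-- Sort-correctness of a spatial atom. -/
def SAtom.WF : SAtom σ → Prop
  | .pto _ _ => True
  | .pred p _ args => args.length + 1 = σ.arity p ∧
      ∀ (i : ℕ) (hi : i < args.length), Term.sort (args[i]'hi) = σ.psort p (i + 1)

/-- Sort-correctness of a symbolic heap. -/
def SymHeap.WF (l : SymHeap σ) : Prop := (∀ a ∈ l.sp, SAtom.WF a) ∧ (∀ a ∈ l.pu, PAtom.WF a)

/-! ## Inductive rules -/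

/-- An inductive rule `p(x₁,…,xₙ) ⇐ λ`: the parameters `x₁,…,xₙ` are pairwise
distinct variables of the profile sorts of the head `p`, and the body `λ` is a
symbolic heap. -/
structure Rule (σ : Sig) : Type where
  head : σ.Pred
  param : ℕ → ℕ
  param_inj : ∀ i j, i < σ.arity head → j < σ.arity head → i ≠ j →
    ((σ.psort head i, param i) : Vr σ) ≠ ((σ.psort head j, param j) : Vr σ)
  body : SymHeap σ
  body_wf : SymHeap.WF body

/-- The `i`-th parameter of a rule, as a term. -/
def Rule.paramTerm (r : Rule σ) (i : ℕ) : Term σ := Term.var (σ.psort r.head i) (r.param i)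

/-- The set of parameters of a rule, as terms. -/
def Rule.paramTermSet (r : Rule σ) : Set (Term σ) := {t | ∃ i < σ.arity r.head, t = r.paramTerm i}

/-- The set of parameters of a rule, as variables. -/
def Rule.paramVarSet (r : Rule σ) : Set (Vr σ) :=
  {v | ∃ i < σ.arity r.head, v = ((σ.psort r.head i, r.param i) : Vr σ)}

/-- The set of terms occurring in (the body of) a rule. -/
def Rule.termSet (r : Rule σ) : Set (Term σ) := SymHeap.termSet r.body

/-- P-rules: rules of the form
`p(x₁,…,xₙ) ⇐ (x₁ ↦ (y₁,…,yₖ) * q₁(z₁,u⃗₁) * ⋯ * qₘ(zₘ,u⃗ₘ)) ⋏ ξ` where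
(1) `ξ` is a conjunction of disequations `u ≉ v` with `u ∈ {x₁,…,xₙ,y₁,…,yₖ}`
    and `v ∈ {y₁,…,yₖ} ∖ {x₁,…,xₙ}`;
(2) `{z₁,…,zₘ} = ({y₁,…,yₖ} ∖ {x₁,…,xₙ}) ∩ V_loc`, with `z₁,…,zₘ` pairwise distinct;
(3) every element of each `u⃗ᵢ` is a parameter, one of the `yⱼ`, or a constant. -/
def Rule.IsPRule (r : Rule σ) : Prop :=
  ∃ (ys : List (Term σ)) (ps : Multiset (SAtom σ)),
    r.body.sp = (SAtom.pto (r.param 0) ys) ::ₘ ps ∧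
    (∀ a ∈ ps, ∃ (q : σ.Pred) (z : ℕ) (args : List (Term σ)), a = SAtom.pred q z args) ∧
    (∀ pa ∈ r.body.pu, ∃ u v : Term σ, pa = PAtom.ne u v ∧
      (u ∈ Rule.paramTermSet r ∨ u ∈ ys) ∧ (v ∈ ys ∧ v ∉ Rule.paramTermSet r)) ∧
    ({t : Term σ | ∃ a ∈ ps, t = Term.var σ.loc (SAtom.root a)} =
      {t : Term σ | t ∈ ys ∧ t ∉ Rule.paramTermSet r ∧ Term.sort t = σ.loc}) ∧
    Multiset.Nodup (Multiset.map SAtom.root ps) ∧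
    (∀ a ∈ ps, ∀ (q : σ.Pred) (z : ℕ) (args : List (Term σ)), a = SAtom.pred q z args →
      ∀ t ∈ args, t ∈ Rule.paramTermSet r ∨ t ∈ ys ∨ ∃ (s : σ.Srt) (c : σ.Const s), t = Term.cst s c)

/-- Productive predicate symbols (least fixpoint): `p` is productive w.r.t. `R`
if `R` contains a rule for `p` all of whose body predicates are productive. -/
inductive Productive (R : Set (Rule σ)) : σ.Pred → Prop where
  | intro (r : Rule σ) : r ∈ R →
      (∀ (q : σ.Pred) (z : ℕ) (args : List (Term σ)),
        SAtom.pred q z args ∈ r.body.sp → Productive R q) →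
      Productive R r.head

/-- `out_ℜ(p)` (0-indexed): outgoing parameter indices, as a least fixpoint. -/
inductive OutParam (R : Set (Rule σ)) : σ.Pred → ℕ → Prop where
  | pto (r : Rule σ) (i : ℕ) (ts : List (Term σ)) :
      r ∈ R → i < σ.arity r.head → σ.psort r.head i = σ.loc →
      SAtom.pto (r.param 0) ts ∈ r.body.sp → r.paramTerm i ∈ ts →
      OutParam R r.head i
  | pred (r : Rule σ) (i : ℕ) (q : σ.Pred) (z : ℕ) (args : List (Term σ)) (j : ℕ) :
      r ∈ R → i < σ.arity r.head → σ.psort r.head i = σ.loc →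
      SAtom.pred q z args ∈ r.body.sp → OutParam R q j →
      SAtom.argAt (SAtom.pred q z args) j = some (r.paramTerm i) →
      OutParam R r.head i

/-- The relation `x →_φ y` on variables of sort `loc` (Definition of `→`):
`φ` contains a predicate atom with root `x` and `y` at an outgoing position,
or a points-to atom with root `x` and `y` in its tuple. -/
def PathTo (R : Set (Rule σ)) (φ : Spatial σ) (x y : ℕ) : Prop :=
  (∃ ts, SAtom.pto x ts ∈ φ ∧ Term.var σ.loc y ∈ ts) ∨
  (∃ (p : σ.Pred) (args : List (Term σ)) (i : ℕ), SAtom.pred p x args ∈ φ ∧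
    OutParam R p i ∧ SAtom.argAt (SAtom.pred p x args) i = some (Term.var σ.loc y))

/-! ## Substitutions and renamings -/

/-- A (sort-preserving) substitution. -/
structure Subst (σ : Sig) : Type where
  app : σ.Srt → ℕ → Term σ
  sorted : ∀ s n, Term.sort (app s n) = s

def Term.subst (θ : Subst σ) : Term σ → Term σ
  | .var s n => θ.app s n
  | .cst s c => .cst s c

/-- The index of a variable of sort `loc` (terms of sort `loc` are always
variables, since there are no constants of sort `loc`). -/
def Term.locIdx : Term σ → ℕ
  | .var _ n => n
  | .cst _ _ => 0

def Subst.locApp (θ : Subst σ) (x : ℕ) : ℕ := Term.locIdx (θ.app σ.loc x)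

def SAtom.subst (θ : Subst σ) : SAtom σ → SAtom σ
  | .pto x ts => .pto (θ.locApp x) (ts.map (Term.subst θ))
  | .pred p x args => .pred p (θ.locApp x) (args.map (Term.subst θ))

def PAtom.subst (θ : Subst σ) : PAtom σ → PAtom σ
  | .eq t u => .eq (Term.subst θ t) (Term.subst θ u)
  | .ne t u => .ne (Term.subst θ t) (Term.subst θ u)

def SymHeap.subst (θ : Subst σ) (l : SymHeap σ) : SymHeap σ :=
  ⟨l.sp.map (SAtom.subst θ), l.pu.map (PAtom.subst θ)⟩

/-- `p(t₁,…,tₙ) ⇐_ℜ λ`: `λ` is obtained from the body of a rule of `R` for `p`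
by renaming its non-parameter variables injectively to variables not occurring in
`t₁,…,tₙ`, and substituting each `tᵢ` for the `i`-th parameter. -/
def Unfolds (R : Set (Rule σ)) (p : σ.Pred) (targs : List (Term σ)) (lam : SymHeap σ) : Prop :=
  ∃ r ∈ R, r.head = p ∧ targs.length = σ.arity p ∧
  ∃ θ : Subst σ,
    (∀ (i : ℕ) (hi : i < targs.length),
      θ.app (σ.psort p i) (r.param i) = targs[i]'hi) ∧
    (∀ v : Vr σ, v ∉ Rule.paramVarSet r →
      ∃ m : ℕ, θ.app v.1 v.2 = Term.var v.1 m ∧ ∀ t ∈ targs, (v.1, m) ∉ Term.varSet t) ∧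
    (∀ v w : Vr σ, v ∉ Rule.paramVarSet r → w ∉ Rule.paramVarSet r →
      θ.app v.1 v.2 = θ.app w.1 w.2 → v = w) ∧
    lam = SymHeap.subst θ r.body

/-- Equivalence of symbolic heaps up to an injective renaming of variables fixing
the variables in `F`. -/
def VarRenEquiv (F : Set (Vr σ)) (l1 l2 : SymHeap σ) : Prop :=
  ∃ θ : Subst σ,
    (∀ v : Vr σ, ∃ m : ℕ, θ.app v.1 v.2 = Term.var v.1 m) ∧
    (∀ v w : Vr σ, θ.app v.1 v.2 = θ.app w.1 w.2 → v = w) ∧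
    (∀ v ∈ F, θ.app v.1 v.2 = Term.var v.1 v.2) ∧
    l2 = SymHeap.subst θ l1

/-! ## Interpretations, stores and heaps -/

/-- An interpretation: pairwise disjoint countably infinite universes (one per
sort; disjointness is by construction of `Interp.Val`) together with an injective
interpretation of the constants. -/
structure Interp (σ : Sig) : Type 1 where
  U : σ.Srt → Type
  countable : ∀ s, Countable (U s)
  infinite : ∀ s, Infinite (U s)
  cval : {s : σ.Srt} → σ.Const s → U s
  cval_inj : ∀ s : σ.Srt, Function.Injective (fun c : σ.Const s => cval c)

/-- The universe `𝔘_loc` of locations. -/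
abbrev Interp.Loc {σ : Sig} (I : Interp σ) : Type := I.U σ.loc

/-- The global universe `𝔘` (disjoint union of the sort universes). -/
abbrev Interp.Val {σ : Sig} (I : Interp σ) : Type := Σ s : σ.Srt, I.U s

/-- A store maps every variable to an element of the universe of its sort
(constants are interpreted by `cval`, see `tval`). -/
abbrev Store {σ : Sig} (I : Interp σ) : Type := ∀ s : σ.Srt, ℕ → I.U s

section Stores

variable {I : Interp σ}

/-- The value of a term under a store. -/
def tval (st : Store I) : Term σ → I.Val
  | .var s n => ⟨s, st s n⟩
  | .cst s c => ⟨s, I.cval c⟩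

/-- The value of a term under a store, typed by the sort of the term. -/
def tvalSorted (st : Store I) : (t : Term σ) → I.U (Term.sort t)
  | .var s n => st s n
  | .cst _ c => I.cval c

end Stores

/-- Heaps: finite partial maps from locations to finite tuples of values. -/
def Heap {σ : Sig} (I : Interp σ) : Type :=
  { f : I.Loc → Option (List I.Val) // {l : I.Loc | f l ≠ none}.Finite }

namespace Heap

variable {I : Interp σ}

/-- The domain of a heap (the set of allocated locations). -/
def dom (h : Heap I) : Set I.Loc := {l | h.1 l ≠ none}

/-- The empty heap. -/
def empty (I : Interp σ) : Heap I :=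
  ⟨fun _ => none, by
    have : {l : I.Loc | (none : Option (List I.Val)) ≠ none} = ∅ := by
      ext l; simp
    rw [this]; exact Set.finite_empty⟩

/-- Disjointness of heaps. -/
def Disj (h1 h2 : Heap I) : Prop := dom h1 ∩ dom h2 = ∅

/-- Union of heaps (used on disjoint heaps, where it is the disjoint union `⊎`). -/
def union (h1 h2 : Heap I) : Heap I :=
  ⟨fun l => (h1.1 l).orElse fun _ => h2.1 l, by
    apply (h1.2.union h2.2).subset
    intro l hl
    simp only [Set.mem_setOf_eq] at hl
    simp only [Set.mem_union, Set.mem_setOf_eq]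
    rcases e1 : h1.1 l with _ | vs
    · right
      intro e2
      rw [e1, e2] at hl
      exact hl rfl
    · left
      simp [e1]⟩

/-- The one-point heap `{l ↦ vs}`. -/
noncomputable def single (l : I.Loc) (vs : List I.Val) : Heap I :=
  ⟨fun l' => if l' = l then some vs else none, by
    apply (Set.finite_singleton l).subset
    intro x hx
    simp only [Set.mem_setOf_eq] at hx
    simp only [Set.mem_singleton_iff]
    by_contra hne
    rw [if_neg hne] at hx
    exact hx rfl⟩

/-- `h1 ⊆ h2`: `h2 = h1 ⊎ h3` for some heap `h3` disjoint from `h1`. -/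
def Sub (h1 h2 : Heap I) : Prop := ∃ h3 : Heap I, Disj h1 h3 ∧ h2 = union h1 h3

/-- The relation `ℓ →_h ℓ'`: `ℓ ∈ dom(h)` and `ℓ'` is a component (of sort `loc`)
of the tuple `h(ℓ)`. -/
def conn (h : Heap I) (l l' : I.Loc) : Prop :=
  ∃ vs, h.1 l = some vs ∧ (⟨σ.loc, l'⟩ : I.Val) ∈ vs

/-- `ref(h)`: the set of locations occurring in `h` (allocated or referred to). -/
def ref (h : Heap I) : Set I.Loc :=
  dom h ∪ {l | ∃ l0 vs, h.1 l0 = some vs ∧ (⟨σ.loc, l⟩ : I.Val) ∈ vs}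

end Heap

section PureSem

variable {I : Interp σ}

/-- Satisfaction of a pure atom (depends only on the store). -/
def PAtom.holds (st : Store I) : PAtom σ → Prop
  | .eq t u => tval st t = tval st u
  | .ne t u => tval st t ≠ tval st u

/-- Satisfaction of a pure formula (depends only on the store). -/
def pureHolds (st : Store I) (ξ : PureF σ) : Prop := ∀ a ∈ ξ, PAtom.holds st a

/-- The store `s ∘ σ` mapping every variable `x` to `s(σ(x))`. -/
def Store.comp (st : Store I) (θ : Subst σ) : Store I :=
  fun s n => (θ.sorted s n) ▸ tvalSorted st (θ.app s n)

end PureSem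

/-! ## Satisfaction -/

mutual
  /-- Satisfaction of a single spatial atom; predicate atoms are interpreted by
  unfolding with the rules of `R` (least fixpoint). -/
  inductive SatA (R : Set (Rule σ)) (I : Interp σ) : Store I → Heap I → SAtom σ → Prop where
    | pto (st : Store I) (x : ℕ) (ts : List (Term σ)) :
        SatA R I st (Heap.single (st σ.loc x) (ts.map (tval st))) (SAtom.pto x ts)
    | pred (st : Store I) (h : Heap I) (p : σ.Pred) (x : ℕ) (args : List (Term σ))
        (r : Rule σ) (st' : Store I) :
        r ∈ R → r.head = p →
        tval st' (r.paramTerm 0) = tval st (Term.var σ.loc x) →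
        (∀ (i : ℕ) (hi : i < args.length),
          tval st' (r.paramTerm (i + 1)) = tval st (args[i]'hi)) →
        SatS R I st' h r.body.sp →
        pureHolds st' r.body.pu →
        SatA R I st h (SAtom.pred p x args)

  /-- Satisfaction of a spatial formula: the heap splits into disjoint parts,
  one per atom. -/
  inductive SatS (R : Set (Rule σ)) (I : Interp σ) : Store I → Heap I → Spatial σ → Prop where
    | emp (st : Store I) : SatS R I st (Heap.empty I) 0
    | cons (st : Store I) (h1 h2 : Heap I) (a : SAtom σ) (φ : Spatial σ) :
        SatA R I st h1 a → SatS R I st h2 φ → Heap.Disj h1 h2 →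
        SatS R I st (Heap.union h1 h2) (a ::ₘ φ)
end

/-- Satisfaction `(s,h) ⊨_ℜ φ ⋏ ξ` of a symbolic heap. -/
def SatH (R : Set (Rule σ)) (I : Interp σ) (st : Store I) (h : Heap I) (l : SymHeap σ) : Prop :=
  SatS R I st h l.sp ∧ pureHolds st l.pu

/-! ## Classes of rule sets -/

/-- A deterministic set of rules: two distinct rules with the same head never
overlap (the conjunction of the equations identifying their parameters and
points-to tuples with their pure constraints is unsatisfiable; the two rules
are renamed apart, whence the two independent stores). -/
def Deterministic (R : Set (Rule σ)) (I : Interp σ) : Prop :=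
  ∀ r1 ∈ R, ∀ r2 ∈ R, r1 ≠ r2 → r1.head = r2.head →
  ∀ (ys1 : List (Term σ)) (ps1 : Multiset (SAtom σ))
    (ys2 : List (Term σ)) (ps2 : Multiset (SAtom σ)),
    r1.body.sp = (SAtom.pto (r1.param 0) ys1) ::ₘ ps1 →
    r2.body.sp = (SAtom.pto (r2.param 0) ys2) ::ₘ ps2 →
    ¬ ∃ st1 st2 : Store I,
      (∀ i < σ.arity r1.head, tval st1 (r1.paramTerm i) = tval st2 (r2.paramTerm i)) ∧
      ys1.map (tval st1) = ys2.map (tval st2) ∧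
      pureHolds st1 r1.body.pu ∧ pureHolds st2 r2.body.pu

/-- The standing hypotheses: `R` is a nonempty loc-deterministic set of P-rules
satisfying Assumptions 1 (every predicate is productive) and 2 (every loc-sorted
parameter index `i ≥ 2`, here 0-indexed `i ≥ 1`, is an outgoing parameter index),
in which every constant occurs. -/
structure GoodRules (R : Set (Rule σ)) (I : Interp σ) : Prop where
  nonempty : R.Nonempty
  prules : ∀ r ∈ R, Rule.IsPRule r
  deterministic : Deterministic R I
  loc_diseq : ∀ r ∈ R, ∀ pa ∈ r.body.pu,
    ∃ x y : ℕ, pa = PAtom.ne (Term.var σ.loc x) (Term.var σ.loc y)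
  productive : ∀ p : σ.Pred, Productive R p
  out_total : ∀ (p : σ.Pred) (i : ℕ), 1 ≤ i → i < σ.arity p → σ.psort p i = σ.loc →
    OutParam R p i
  const_occurs : ∀ (s : σ.Srt) (c : σ.Const s), ∃ r ∈ R, Term.cst s c ∈ Rule.termSet r

/-! ## Sequents -/

/-- A sequent `λ ⊢_ℜ^V γ`. -/
structure Sequent (σ : Sig) : Type where
  lhs : SymHeap σ
  rhs : SymHeap σ
  V : Multiset ℕ

/-- A store is injective on a multiset `V` of loc-variables:
`{x,y} ⊆ₘ V → s(x) ≠ s(y)`. -/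
def StoreInjOn {I : Interp σ} (st : Store I) (V : Multiset ℕ) : Prop :=
  ∀ x y : ℕ, ({x, y} : Multiset ℕ) ≤ V → st σ.loc x ≠ st σ.loc y

/-- A counter-model of a sequent. -/
def CounterModel (R : Set (Rule σ)) (I : Interp σ) (S : Sequent σ)
    (st : Store I) (h : Heap I) : Prop :=
  SatH R I st h S.lhs ∧ ¬ SatH R I st h S.rhs ∧
  (∀ x ∈ S.V, st σ.loc x ∉ Heap.dom h) ∧ StoreInjOn st S.V

/-- Validity of a sequent: no counter-model. -/
def SeqValid (R : Set (Rule σ)) (I : Interp σ) (S : Sequent σ) : Prop :=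
  ¬ ∃ (st : Store I) (h : Heap I), CounterModel R I S st h

/-- Axioms (modulo AC): `φ ⋏ (ξ ∧ ξ') ⊢ φ ⋏ ξ`; `φ ⋏ (ξ ∧ x ≉ x) ⊢ γ`;
a heap-unsatisfiable left-hand side; an allocated variable in `V`, or a
repeated variable in `V`. -/
def IsAxiom (S : Sequent σ) : Prop :=
  (S.lhs.sp = S.rhs.sp ∧ ∀ a ∈ S.rhs.pu, a ∈ S.lhs.pu) ∨
  (∃ v : Vr σ, PAtom.ne (Term.var v.1 v.2) (Term.var v.1 v.2) ∈ S.lhs.pu) ∨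
  (¬ (alloc S.lhs.sp).Nodup) ∨
  (∃ x ∈ alloc S.lhs.sp, x ∈ S.V) ∨
  (¬ S.V.Nodup)

/-- The relation `λ ▷_V ξ` (Definition of `▷`). -/
def Entails (lam : SymHeap σ) (V : Multiset ℕ) (ξ : PureF σ) : Prop :=
  ∀ ζ ∈ ξ,
    ζ ∈ lam.pu ∨
    (∃ v : Vr σ, ζ = PAtom.eq (Term.var v.1 v.2) (Term.var v.1 v.2)) ∨
    (∃ (s1 : σ.Srt) (c1 : σ.Const s1) (s2 : σ.Srt) (c2 : σ.Const s2),
      ζ = PAtom.ne (Term.cst s1 c1) (Term.cst s2 c2) ∧ Term.cst s1 c1 ≠ Term.cst s2 c2) ∨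
    (∃ x1 x2 : ℕ, ζ = PAtom.ne (Term.var σ.loc x1) (Term.var σ.loc x2) ∧
      ({x1, x2} : Multiset ℕ) ≤ SymHeap.alloc lam + V)

/-- A `→`-compatible model of a spatial formula. -/
def PathCompatible (R : Set (Rule σ)) (I : Interp σ) (st : Store I) (h : Heap I)
    (φ : Spatial σ) : Prop :=
  SatS R I st h φ ∧
  ∀ x y : ℕ, Relation.ReflTransGen (Heap.conn h) (st σ.loc x) (st σ.loc y) →
    Relation.ReflTransGen (PathTo R φ) x y

/-! ## 𝔘-mappings -/

/-- A `𝔘`-mapping: a sort-preserving map on the universe fixing the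
interpretations of constants. -/
structure UMap {σ : Sig} (I : Interp σ) : Type where
  f : ∀ s : σ.Srt, I.U s → I.U s
  fix_const : ∀ (s : σ.Srt) (c : σ.Const s), f s (I.cval c) = I.cval c

/-- A `𝔘`-mapping, as a map on `𝔘`. -/
def UMap.onVal {σ : Sig} {I : Interp σ} (ν : UMap I) : I.Val → I.Val :=
  fun v => ⟨v.1, ν.f v.1 v.2⟩

/-- The store `ν ∘ s`. -/
def UMap.compStore {σ : Sig} {I : Interp σ} (ν : UMap I) (st : Store I) : Store I :=
  fun s n => ν.f s (st s n)

/-! The premises are obtained by splitting a counter-model `(s, h₁ ⊎ h₂)` of the conclusion along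
`φ₁ * φ₂`. If both halves satisfied the corresponding right-hand sides, so would `h₁ ⊎ h₂`, so one
half `hᵢ` is a counter-model candidate for `Pᵢ`. The extra variables `alloc(φ₃₋ᵢ)` are allocated in
the other half, hence outside `dom(hᵢ)`, and they are pairwise distinct because P-rules allocate
the root of every atom. Since `φ₃₋ᵢ ≠ emp`, the other half is nonempty, so `hᵢ` is proper. -/

theorem Multiset.pair_le_add {α : Type*} {x y : α} {u v : Multiset α}
    (h : ({x, y} : Multiset α) ≤ u + v) :
    ({x, y} : Multiset α) ≤ u ∨ ({x, y} : Multiset α) ≤ v ∨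
      (x ∈ u ∧ y ∈ v) ∨ (x ∈ v ∧ y ∈ u) := by
  wlog hx : x ∈ u generalizing u v
  · have hxv : x ∈ v := (Multiset.mem_add.mp (Multiset.mem_of_le h (by simp))).resolve_left hx
    rcases this (add_comm u v ▸ h) hxv with h' | h' | h' | h'
    exacts [Or.inr (Or.inl h'), Or.inl h', Or.inr (Or.inr (Or.inr h')),
      Or.inr (Or.inr (Or.inl h'))]
  obtain ⟨u', rfl⟩ := Multiset.exists_cons_of_mem hx
  have hy : y ∈ u' + v := by
    rw [Multiset.insert_eq_cons, Multiset.cons_add, Multiset.cons_le_cons_iff,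
      Multiset.singleton_le] at h
    exact h
  rcases Multiset.mem_add.mp hy with hy | hy
  · exact Or.inl (Multiset.cons_le_cons x (Multiset.singleton_le.mpr hy))
  · exact Or.inr (Or.inr (Or.inl ⟨hx, hy⟩))

namespace Heap

variable {I : Interp σ}

theorem ext {h1 h2 : Heap I} (h : ∀ l, h1.1 l = h2.1 l) : h1 = h2 :=
  Subtype.ext (funext h)

theorem dom_union (h1 h2 : Heap I) : dom (union h1 h2) = dom h1 ∪ dom h2 := by
  ext l
  simp only [dom, union, Set.mem_ofPred_eq, Set.mem_union]
  cases h1.1 l <;> simp [Option.orElse]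

theorem disj_iff_disjoint {h1 h2 : Heap I} : Disj h1 h2 ↔ Disjoint (dom h1) (dom h2) :=
  Set.disjoint_iff_inter_eq_empty.symm

theorem Disj.symm {h1 h2 : Heap I} (hd : Disj h1 h2) : Disj h2 h1 :=
  disj_iff_disjoint.mpr (disj_iff_disjoint.mp hd).symm

theorem union_comm {h1 h2 : Heap I} (hd : Disj h1 h2) : union h1 h2 = union h2 h1 := by
  refine ext fun l => ?_
  cases e1 : h1.1 l with
  | none => cases e2 : h2.1 l <;> simp [union, Option.orElse, e1, e2]
  | some _ =>
    have e2 : h2.1 l = none := by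
      by_contra hl
      exact Set.disjoint_left.mp (disj_iff_disjoint.mp hd) (by simp [dom, e1]) hl
    simp [union, Option.orElse, e1, e2]

theorem union_assoc (h1 h2 h3 : Heap I) :
    union (union h1 h2) h3 = union h1 (union h2 h3) :=
  ext fun l => by cases e : h1.1 l <;> simp [union, Option.orElse, e]

theorem empty_union (h : Heap I) : union (empty I) h = h :=
  ext fun _ => by simp [union, empty, Option.orElse]

theorem disj_empty (h : Heap I) : Disj (empty I) h :=
  disj_iff_disjoint.mpr (Set.disjoint_left.mpr fun _ hl => by simp [dom, empty] at hl)

theorem mem_dom_single (l : I.Loc) (vs : List I.Val) : l ∈ dom (single l vs) := by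
  simp [dom, single]

theorem ne_union_left {h1 h2 : Heap I} (hd : Disj h1 h2) (hne : (dom h2).Nonempty) :
    h1 ≠ union h1 h2 := by
  obtain ⟨l, hl⟩ := hne
  intro he
  have hl1 : l ∈ dom h1 := by
    rw [he, dom_union]
    exact Or.inr hl
  exact Set.disjoint_left.mp (disj_iff_disjoint.mp hd) hl1 hl

end Heap

section Satisfaction

variable {I : Interp σ} {R : Set (Rule σ)} {st : Store I}

theorem satS_zero_iff {h : Heap I} : SatS R I st h 0 ↔ h = Heap.empty I := by
  refine ⟨fun hs => ?_, fun he => he ▸ SatS.emp st⟩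
  generalize hμ : (0 : Spatial σ) = μ at hs
  cases hs with
  | emp => rfl
  | cons => exact absurd hμ.symm (Multiset.cons_ne_zero)

/-- `SatS.cons` only peels off the head of the multiset; inverting it at an arbitrary atom
needs an induction on the rest. -/
theorem satS_cons_iff {h : Heap I} {a : SAtom σ} {φ : Spatial σ} :
    SatS R I st h (a ::ₘ φ) ↔
      ∃ h1 h2, Heap.Disj h1 h2 ∧ h = Heap.union h1 h2 ∧ SatA R I st h1 a ∧ SatS R I st h2 φ := by
  refine ⟨fun hs => ?_, fun ⟨h1, h2, hd, he, hA, hS⟩ => he ▸ SatS.cons st h1 h2 a φ hA hS hd⟩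
  induction φ using Multiset.strongInductionOn generalizing a h with
  | ih φ IH =>
  generalize hμ : a ::ₘ φ = μ at hs
  cases hs with
  | emp => exact absurd hμ Multiset.cons_ne_zero
  | cons _ h1 h2 b φ' hA hS hd =>
    rcases Multiset.cons_eq_cons.mp hμ with ⟨rfl, rfl⟩ | ⟨-, cs, rfl, rfl⟩
    · exact ⟨h1, h2, hd, rfl, hA, hS⟩
    obtain ⟨g1, g2, hg, rfl, hA', hS'⟩ := IH cs (Multiset.lt_cons_self cs b) hS
    obtain ⟨hd1, hd2⟩ := Set.disjoint_union_right.mp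
      (Heap.dom_union g1 g2 ▸ Heap.disj_iff_disjoint.mp hd)
    refine ⟨g1, Heap.union h1 g2, ?_, ?_, hA', SatS.cons st h1 g2 b cs hA hS' ?_⟩
    · rw [Heap.disj_iff_disjoint, Heap.dom_union]
      exact Set.disjoint_union_right.mpr ⟨hd1.symm, Heap.disj_iff_disjoint.mp hg⟩
    · rw [← Heap.union_assoc, Heap.union_comm (Heap.disj_iff_disjoint.mpr hd1),
        Heap.union_assoc]
    · exact Heap.disj_iff_disjoint.mpr hd2

theorem satS_add_iff {h : Heap I} {φ ψ : Spatial σ} :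
    SatS R I st h (φ + ψ) ↔
      ∃ h1 h2, Heap.Disj h1 h2 ∧ h = Heap.union h1 h2 ∧ SatS R I st h1 φ ∧ SatS R I st h2 ψ := by
  induction φ using Multiset.induction_on generalizing h with
  | empty =>
    simp only [zero_add, satS_zero_iff]
    refine ⟨fun hs => ⟨_, h, Heap.disj_empty h, (Heap.empty_union h).symm, rfl, hs⟩, ?_⟩
    rintro ⟨_, h2, -, rfl, rfl, hs⟩
    rwa [Heap.empty_union]
  | cons a φ ih =>
    simp only [Multiset.cons_add, satS_cons_iff, ih]
    constructor
    · rintro ⟨g1, _, hd, rfl, hA, k1, k2, hk, rfl, hS1, hS2⟩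
      rw [Heap.disj_iff_disjoint, Heap.dom_union, Set.disjoint_union_right] at hd
      refine ⟨Heap.union g1 k1, k2, ?_, (Heap.union_assoc g1 k1 k2).symm,
        ⟨g1, k1, Heap.disj_iff_disjoint.mpr hd.1, rfl, hA, hS1⟩, hS2⟩
      rw [Heap.disj_iff_disjoint, Heap.dom_union]
      exact Set.disjoint_union_left.mpr ⟨hd.2, Heap.disj_iff_disjoint.mp hk⟩
    · rintro ⟨_, h2, hd, rfl, ⟨g1, k1, hg, rfl, hA, hS1⟩, hS2⟩
      rw [Heap.disj_iff_disjoint, Heap.dom_union, Set.disjoint_union_left] at hd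
      refine ⟨g1, Heap.union k1 h2, ?_, Heap.union_assoc g1 k1 h2,
        hA, k1, h2, Heap.disj_iff_disjoint.mpr hd.2, rfl, hS1, hS2⟩
      rw [Heap.disj_iff_disjoint, Heap.dom_union]
      exact Set.disjoint_union_right.mpr ⟨Heap.disj_iff_disjoint.mp hg, hd.1⟩

theorem pureHolds_add {ξ1 ξ2 : PureF σ} :
    pureHolds st (ξ1 + ξ2) ↔ pureHolds st ξ1 ∧ pureHolds st ξ2 := by
  simp only [pureHolds, Multiset.mem_add, or_imp, forall_and]

theorem SatH.add {h1 h2 : Heap I} {ψ1 ψ2 : Spatial σ} {ζ1 ζ2 : PureF σ}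
    (hs1 : SatH R I st h1 ⟨ψ1, ζ1⟩) (hs2 : SatH R I st h2 ⟨ψ2, ζ2⟩) (hd : Heap.Disj h1 h2) :
    SatH R I st (Heap.union h1 h2) ⟨ψ1 + ψ2, ζ1 + ζ2⟩ :=
  ⟨satS_add_iff.mpr ⟨h1, h2, hd, rfl, hs1.1, hs2.1⟩, pureHolds_add.mpr ⟨hs1.2, hs2.2⟩⟩

/-- A P-rule body starts with a points-to atom on the first parameter, so the root of a
predicate atom is allocated. -/
theorem SatA.root_mem_dom (hR : ∀ r ∈ R, r.IsPRule) {h : Heap I} {a : SAtom σ} (hA : SatA R I st h a) :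
    st σ.loc a.root ∈ Heap.dom h := by
  cases hA with
  | pto => exact Heap.mem_dom_single _ _
  | pred _ h p x args r st' hr _ hroot _ hS _ =>
    obtain ⟨ys, ps, hbody, -⟩ := hR r hr
    rw [hbody, satS_cons_iff] at hS
    obtain ⟨h1, h2, -, rfl, hpto, -⟩ := hS
    have hx : st' σ.loc (r.param 0) = st σ.loc x := by
      rw [Rule.paramTerm, σ.psort_zero r.head] at hroot
      simpa [tval] using hroot
    cases hpto
    rw [Heap.dom_union, SAtom.root, ← hx]
    exact Or.inl (Heap.mem_dom_single _ _)

theorem SatS.mem_dom_of_mem_alloc (hR : ∀ r ∈ R, r.IsPRule) {h : Heap I} {φ : Spatial σ} (hs : SatS R I st h φ)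
    {x : ℕ} (hx : x ∈ alloc φ) : st σ.loc x ∈ Heap.dom h := by
  obtain ⟨a, ha, rfl⟩ := Multiset.mem_map.mp hx
  rw [← Multiset.cons_erase ha, satS_cons_iff] at hs
  obtain ⟨h1, h2, -, rfl, hA, -⟩ := hs
  rw [Heap.dom_union]
  exact Or.inl (hA.root_mem_dom hR)

theorem SatS.dom_nonempty (hR : ∀ r ∈ R, r.IsPRule) {h : Heap I} {φ : Spatial σ} (hs : SatS R I st h φ) (hφ : φ ≠ 0) :
    (Heap.dom h).Nonempty := by
  obtain ⟨a, ha⟩ := Multiset.exists_mem_of_ne_zero hφ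
  exact ⟨_, hs.mem_dom_of_mem_alloc hR (Multiset.mem_map_of_mem SAtom.root ha)⟩

end Satisfaction

section Injectivity

variable {I : Interp σ} {st : Store I}

theorem storeInjOn_singleton (z : ℕ) : StoreInjOn st {z} := fun x y hxy =>
  absurd (Multiset.card_le_card hxy) (by simp)

theorem StoreInjOn.add {V W : Multiset ℕ} (hV : StoreInjOn st V) (hW : StoreInjOn st W)
    (hVW : ∀ x ∈ V, ∀ y ∈ W, st σ.loc x ≠ st σ.loc y) : StoreInjOn st (V + W) := by
  intro x y hxy
  rcases Multiset.pair_le_add hxy with h | h | ⟨hx, hy⟩ | ⟨hx, hy⟩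
  exacts [hV x y h, hW x y h, hVW x hx y hy, (hVW y hy x hx).symm]

theorem SatS.storeInjOn_alloc {R : Set (Rule σ)} (hR : ∀ r ∈ R, r.IsPRule) {h : Heap I}
    {φ : Spatial σ} (hs : SatS R I st h φ) : StoreInjOn st (alloc φ) := by
  induction φ using Multiset.induction_on generalizing h with
  | empty => exact fun x y hxy => absurd (Multiset.le_zero.mp hxy) (by simp)
  | cons a φ ih =>
    obtain ⟨h1, h2, hd, rfl, hA, hS⟩ := satS_cons_iff.mp hs
    rw [alloc, Multiset.map_cons, ← Multiset.singleton_add]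
    refine (storeInjOn_singleton _).add (ih hS) fun x hx y hy he => ?_
    rw [Multiset.mem_singleton.mp hx] at he
    exact Set.disjoint_left.mp (Heap.disj_iff_disjoint.mp hd) (hA.root_mem_dom hR)
      (he ▸ hS.mem_dom_of_mem_alloc hR hy)

end Injectivity

theorem counterModel_of_split {I : Interp σ} {R : Set (Rule σ)} (hR : ∀ r ∈ R, r.IsPRule)
    {st : Store I} {h1 h2 : Heap I} {l γ : SymHeap σ} {φ : Spatial σ} {V : Multiset ℕ}
    (hd : Heap.Disj h1 h2) (hV : ∀ x ∈ V, st σ.loc x ∉ Heap.dom (Heap.union h1 h2))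
    (hinj : StoreInjOn st V) (hl : SatH R I st h1 l) (hγ : ¬ SatH R I st h1 γ)
    (hs : SatS R I st h2 φ) :
    CounterModel R I ⟨l, γ, V + alloc φ⟩ st h1 := by
  simp only [Heap.dom_union, Set.mem_union, not_or] at hV
  have halloc : ∀ y ∈ alloc φ, st σ.loc y ∈ Heap.dom h2 :=
    fun y hy => hs.mem_dom_of_mem_alloc hR hy
  refine ⟨hl, hγ, fun x hx => ?_, hinj.add (hs.storeInjOn_alloc hR) fun x hx y hy he => ?_⟩
  · rcases Multiset.mem_add.mp hx with hx | hx
    · exact (hV x hx).1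
    · exact Set.disjoint_right.mp (Heap.disj_iff_disjoint.mp hd) (halloc x hx)
  · exact (hV x hx).2 (he ▸ halloc y hy)

theorem exists_premise_counterModel {I : Interp σ} {R : Set (Rule σ)}
    (hR : ∀ r ∈ R, r.IsPRule) {φ1 φ2 ψ1 ψ2 : Spatial σ} {ξ1 ξ2 ζ1 ζ2 : PureF σ}
    {V : Multiset ℕ} (hφ1 : φ1 ≠ 0) (hφ2 : φ2 ≠ 0) {st : Store I} {h : Heap I}
    (hcm : CounterModel R I ⟨⟨φ1 + φ2, ξ1 + ξ2⟩, ⟨ψ1 + ψ2, ζ1 + ζ2⟩, V⟩ st h) :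
    ∃ h' : Heap I, Heap.Sub h' h ∧ h' ≠ h ∧
      (CounterModel R I ⟨⟨φ1, ξ1⟩, ⟨ψ1, ζ1⟩, V + alloc φ2⟩ st h' ∨
       CounterModel R I ⟨⟨φ2, ξ2⟩, ⟨ψ2, ζ2⟩, V + alloc φ1⟩ st h') := by
  obtain ⟨⟨hsp, hpu⟩, hψ, hV, hinj⟩ := hcm
  obtain ⟨h1, h2, hd, rfl, hs1, hs2⟩ := satS_add_iff.mp hsp
  rw [pureHolds_add] at hpu
  by_cases hψ1 : SatH R I st h1 ⟨ψ1, ζ1⟩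
  · have hψ2 : ¬ SatH R I st h2 ⟨ψ2, ζ2⟩ := fun hψ2 => hψ (hψ1.add hψ2 hd)
    rw [Heap.union_comm hd] at hV ⊢
    exact ⟨h2, ⟨h1, hd.symm, rfl⟩, Heap.ne_union_left hd.symm (hs1.dom_nonempty hR hφ1),
      Or.inr (counterModel_of_split hR hd.symm hV hinj ⟨hs2, hpu.2⟩ hψ2 hs1)⟩
  · exact ⟨h1, ⟨h2, hd, rfl⟩, Heap.ne_union_left hd (hs2.dom_nonempty hR hφ2),
      Or.inl (counterModel_of_split hR hd hV hinj ⟨hs1, hpu.1⟩ hψ1 hs2)⟩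

/-- soundness of rule S.  Every counter-model `(s,h)` of the
conclusion yields a counter-model `(s,h')`, with `h'` a proper subheap of `h`,
of one of the two premises; in particular if both premises are valid then so is
the conclusion. -/
theorem STATEMENT_16 {σ : Sig} {I : Interp σ} (R : Set (Rule σ)) (hR : GoodRules R I)
    (φ1 φ2 ψ1 ψ2 : Spatial σ) (ξ1 ξ2 ζ1 ζ2 : PureF σ) (V : Multiset ℕ)
    (hφ1 : φ1 ≠ 0) (hφ2 : φ2 ≠ 0) :
    (∀ (st : Store I) (h : Heap I),
      CounterModel R I ⟨⟨φ1 + φ2, ξ1 + ξ2⟩, ⟨ψ1 + ψ2, ζ1 + ζ2⟩, V⟩ st h →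
      ∃ h' : Heap I, Heap.Sub h' h ∧ h' ≠ h ∧
        (CounterModel R I ⟨⟨φ1, ξ1⟩, ⟨ψ1, ζ1⟩, V + alloc φ2⟩ st h' ∨
         CounterModel R I ⟨⟨φ2, ξ2⟩, ⟨ψ2, ζ2⟩, V + alloc φ1⟩ st h')) ∧
    (SeqValid R I ⟨⟨φ1, ξ1⟩, ⟨ψ1, ζ1⟩, V + alloc φ2⟩ →
     SeqValid R I ⟨⟨φ2, ξ2⟩, ⟨ψ2, ζ2⟩, V + alloc φ1⟩ →
     SeqValid R I ⟨⟨φ1 + φ2, ξ1 + ξ2⟩, ⟨ψ1 + ψ2, ζ1 + ζ2⟩, V⟩) := by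
  refine ⟨fun _ _ => exists_premise_counterModel hR.prules hφ1 hφ2, fun hv1 hv2 ⟨st, h, hcm⟩ => ?_⟩
  obtain ⟨h', -, -, hc | hc⟩ := exists_premise_counterModel hR.prules hφ1 hφ2 hcm
  exacts [hv1 ⟨st, h', hc⟩, hv2 ⟨st, h', hc⟩]

end SLID
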